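/- arXiv:2504.03056 — 3 statements merged into one kernel-verified Lean document; each statement's English description precedes it below -/
import Mathlib

section
/- Let c be a joint choice on 𝔐_Q and S, T nonempty subsets of Q. Suppose 𝔐_Q satisfies menus betweenness with respect to S and T: for any A_Q, B_Q ∈ 𝔐_Q with π_{S∩T}(A_Q) = π_{S∩T}(B_Q), there exists E_Q ∈ 𝔐_Q with π_S(E_Q) = π_S(A_Q) and π_T(E_Q) = π_T(B_Q). If c is S-separable and T-separable, then c is (S ∩ T)-separable. -/
open Classical

namespace JC

variable {Q : Type*} {X : Q → Type*}

/-- Projection of an alternative onto the coordinates in `S`. -/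
def proj (S : Set Q) (x : ∀ q, X q) : ∀ q : S, X q := fun q => x q

/-- Pointwise projection of a set of alternatives onto the coordinates in `S`. -/
def projSet (S : Set Q) (Y : Set (∀ q, X q)) : Set (∀ q : S, X q) :=
  (proj S) '' Y

/-- Projection of a menu onto the coordinates in `S`. -/
def projMenu (S : Set Q) (A : ∀ q, Set (X q)) : ∀ q : S, Set (X q) :=
  fun q => A q

/-- The product set of alternatives determined by a menu. -/
def prodSet (A : ∀ q, Set (X q)) : Set (∀ q, X q) := {x | ∀ q, x q ∈ A q}

/-- `c` is a joint choice on the family of menus `M`. -/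
def IsJointChoice (M : Set (∀ q, Set (X q)))
    (c : (∀ q, Set (X q)) → Set (∀ q, X q)) : Prop :=
  ∀ A ∈ M, (c A).Nonempty ∧ c A ⊆ prodSet A

/-- `S`-separability of a joint choice: the projection of the chosen set onto `S`
depends only on the projection of the menu onto `S`. -/
def Sep (M : Set (∀ q, Set (X q)))
    (c : (∀ q, Set (X q)) → Set (∀ q, X q)) (S : Set Q) : Prop :=
  ∀ A ∈ M, ∀ B ∈ M, projMenu S A = projMenu S B →
    projSet S (c A) = projSet S (c B)

/-- Asymmetric (strict) part of a relation. -/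
def strictPart {α : Type*} (R : α → α → Prop) (x y : α) : Prop := R x y ∧ ¬ R y x

/-- Maximal elements of `A` with respect to `R`. -/
def maxOf {α : Type*} (R : α → α → Prop) (A : Set α) : Set α :=
  {x ∈ A | ∀ y ∈ A, ¬ strictPart R y x}

/-- Acyclicity of (the strict part of) a relation. -/
def Acyclic {α : Type*} (R : α → α → Prop) : Prop :=
  ∀ x, ¬ Relation.TransGen (strictPart R) x x

/-- Revealed joint preference of a joint choice. -/
def revPref (M : Set (∀ q, Set (X q)))
    (c : (∀ q, Set (X q)) → Set (∀ q, X q)) (x y : ∀ q, X q) : Prop :=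
  ∃ B ∈ M, x ∈ c B ∧ y ∈ prodSet B

/-- Rationalizability of a joint choice. -/
def Rationalizable (M : Set (∀ q, Set (X q)))
    (c : (∀ q, Set (X q)) → Set (∀ q, X q)) : Prop :=
  ∀ A ∈ M, c A = maxOf (revPref M c) (prodSet A)

/-- Combine an `S`-part and a `-S`-part into a full alternative. -/
noncomputable def combine (S : Set Q) (xS : ∀ q : S, X q) (u : ∀ q : ↥(Sᶜ), X q) :
    ∀ q, X q :=
  fun q => if h : q ∈ S then xS ⟨q, h⟩ else u ⟨q, h⟩

/-- `S`-separability of a joint preference. -/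
def PrefSep (S : Set Q) (R : (∀ q, X q) → (∀ q, X q) → Prop) : Prop :=
  ∀ (xS yS : ∀ q : S, X q),
    (∃ u, R (combine S xS u) (combine S yS u)) →
    ∀ u, R (combine S xS u) (combine S yS u)

/-- Revealed preference of a one-dimensional choice on sets. -/
def revealed1 {α : Type*} (D : Set (Set α)) (d : Set α → Set α) (x y : α) : Prop :=
  ∃ B ∈ D, x ∈ d B ∧ y ∈ B



lemma projSet_mono_eq {Q : Type*} {X : Q → Type*} {S S' : Set Q} (hsub : S' ⊆ S)
    {Y Z : Set (∀ q, X q)} (h : projSet S Y = projSet S Z) :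
    projSet S' Y = projSet S' Z := by
  have key : ∀ W : Set (∀ q, X q),
      projSet S' W = (fun f : ∀ q : S, X q => fun q : S' => f ⟨q, hsub q.2⟩) '' projSet S W := by
    intro W
    ext g
    constructor
    · rintro ⟨x, hx, rfl⟩
      exact ⟨proj S x, ⟨x, hx, rfl⟩, rfl⟩
    · rintro ⟨f, ⟨x, hx, rfl⟩, rfl⟩
      exact ⟨x, hx, rfl⟩
  rw [key Y, key Z, h]

/-- Theorem 2.2(ii): under menus betweenness, separability is stable
under intersection. -/
theorem stmt_2 (M : Set (∀ q, Set (X q)))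
    (c : (∀ q, Set (X q)) → Set (∀ q, X q)) (hc : IsJointChoice M c)
    (S T : Set Q) (hS : S.Nonempty) (hT : T.Nonempty) (hST : (S ∩ T).Nonempty)
    (hbetween : ∀ A ∈ M, ∀ B ∈ M, projMenu (S ∩ T) A = projMenu (S ∩ T) B →
      ∃ E ∈ M, projMenu S E = projMenu S A ∧ projMenu T E = projMenu T B)
    (hSsep : Sep M c S) (hTsep : Sep M c T) :
    Sep M c (S ∩ T) := by
  intro A hA B hB hAB
  obtain ⟨E, hE, hES, hET⟩ := hbetween A hA B hB hAB
  have h1 : projSet (S ∩ T) (c E) = projSet (S ∩ T) (c A) :=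
    projSet_mono_eq Set.inter_subset_left (hSsep E hE A hA hES)
  have h2 : projSet (S ∩ T) (c E) = projSet (S ∩ T) (c B) :=
    projSet_mono_eq Set.inter_subset_right (hTsep E hE B hB hET)
  rw [← h1, h2]

end JC
end

section
/- Let Q be a finite set. If {S_1, …, S_n} is a selective family for Q (for every q ∈ Q there is a nonempty set of indices whose corresponding S_i's intersect exactly in {q}), then |Q| ≤ C(n, ⌊n/2⌋), the binomial coefficient n choose ⌊n/2⌋. -/
open Classical

namespace JC

variable {Q : Type*} {X : Q → Type*}

section Selective

variable {α ι : Type*}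

theorem injective_of_biInter_eq_singleton {S : ι → Set α} {I : α → Set ι}
    (hI : ∀ a, ⋂ i ∈ I a, S i = {a}) : Function.Injective I := by
  intro a b hab
  have hab' : ({a} : Set α) = {b} := by rw [← hI a, ← hI b, hab]
  exact Set.singleton_eq_singleton_iff.mp hab'

theorem isAntichain_range_of_biInter_eq_singleton {S : ι → Set α} {I : α → Set ι}
    (hI : ∀ a, ⋂ i ∈ I a, S i = {a}) : IsAntichain (· ⊆ ·) (Set.range I) := by
  rintro _ ⟨a, rfl⟩ _ ⟨b, rfl⟩ hne hsub
  have hba : ({b} : Set α) ⊆ {a} := hI a ▸ hI b ▸ Set.biInter_subset_biInter_left hsub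
  exact hne (congrArg I (Set.singleton_subset_singleton.mp hba).symm)

theorem card_le_choose_of_injective_of_isAntichain_range [Fintype α] [Fintype ι]
    {f : α → Set ι} (hf : Function.Injective f) (hanti : IsAntichain (· ⊆ ·) (Set.range f)) :
    Fintype.card α ≤ (Fintype.card ι).choose (Fintype.card ι / 2) := by
  set g : α → Finset ι := fun a => (f a).toFinset
  have hg : Function.Injective g := fun a b hab => hf (Set.toFinset_inj.mp hab)
  have hanti' : IsAntichain (· ⊆ ·) (SetLike.coe (Finset.univ.image g)) := by
    rintro _ ha _ hb hne hsub
    obtain ⟨a, -, rfl⟩ := Finset.mem_image.mp ha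
    obtain ⟨b, -, rfl⟩ := Finset.mem_image.mp hb
    exact hanti ⟨a, rfl⟩ ⟨b, rfl⟩ (fun h => hne (congrArg (·.toFinset) h))
      (Set.toFinset_subset_toFinset.mp hsub)
  simpa [Finset.card_image_of_injective _ hg] using hanti'.sperner

end Selective

theorem stmt_9_general [Fintype Q] (n : ℕ) (Sfam : Fin n → Set Q)
    (hselective : ∀ q : Q, ∃ I : Set (Fin n), I.Nonempty ∧ (⋂ i ∈ I, Sfam i) = {q}) :
    Fintype.card Q ≤ n.choose (n / 2) := by
  choose I _ hI using hselective
  simpa using card_le_choose_of_injective_of_isAntichain_range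
    (injective_of_biInter_eq_singleton hI) (isAntichain_range_of_biInter_eq_singleton hI)

/-- Lemma 3.6, first half: if `Q` admits a selective family of size
`n`, then `|Q| ≤ C(n, ⌊n/2⌋)`. -/
theorem stmt_9 [Fintype Q] (n : ℕ) (Sfam : Fin n → Set Q)
    (hinj : Function.Injective Sfam) (hne : ∀ i, (Sfam i).Nonempty)
    (hselective : ∀ q : Q, ∃ I : Set (Fin n), I.Nonempty ∧ (⋂ i ∈ I, Sfam i) = {q}) :
    Fintype.card Q ≤ n.choose (n / 2) :=
  stmt_9_general n Sfam hselective

end JC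
end

section
/- Let c be a joint choice on 𝔐_Q that is S-separable and rationalizable, and suppose 𝔐_Q is S-rich. Then the revealed joint preference ≿^c on ∏_{q∈Q} X_q is S-separable. -/
open Classical

namespace JC

variable {Q : Type*} {X : Q → Type*}

/-- Theorem 4.3(ii): an `S`-separable rationalizable joint choice on an
`S`-rich domain reveals an `S`-separable joint preference. -/
theorem stmt_12 (M : Set (∀ q, Set (X q)))
    (c : (∀ q, Set (X q)) → Set (∀ q, X q)) (hc : IsJointChoice M c)
    (S : Set Q) (hS : S.Nonempty)
    (hsep : Sep M c S) (hrat : Rationalizable M c)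
    (hrich : ∀ (xS yS : ∀ q : S, X q) (u : ∀ q : ↥(Sᶜ), X q),
      (∃ A ∈ M, combine S xS u ∈ prodSet A ∧ combine S yS u ∈ prodSet A) →
      ∀ v : ∀ q : ↥(Sᶜ), X q,
        (fun q => if h : q ∈ S then ({xS ⟨q, h⟩, yS ⟨q, h⟩} : Set (X q))
          else {v ⟨q, h⟩}) ∈ M) :
    PrefSep S (revPref M c) := by
  rintro xS yS ⟨u, B, hBM, hxc, hyB⟩ v
  have hxB : combine S xS u ∈ prodSet B := (hc B hBM).2 hxc
  have hmem : ∀ w : ∀ q : ↥(Sᶜ), X q,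
      (fun q => if h : q ∈ S then ({xS ⟨q,h⟩, yS ⟨q,h⟩} : Set (X q))
        else {w ⟨q,h⟩}) ∈ M :=
    hrich xS yS u ⟨B, hBM, hxB, hyB⟩
  set Au : ∀ q, Set (X q) := fun q => if h : q ∈ S then ({xS ⟨q,h⟩, yS ⟨q,h⟩} : Set (X q)) else {u ⟨q,h⟩} with hAudef
  set Av : ∀ q, Set (X q) := fun q => if h : q ∈ S then ({xS ⟨q,h⟩, yS ⟨q,h⟩} : Set (X q)) else {v ⟨q,h⟩} with hAvdef
  have hAu : Au ∈ M := hmem u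
  have hAv : Av ∈ M := hmem v
  have hsub : prodSet Au ⊆ prodSet B := by
    intro z hz q
    have hzq := hz q
    by_cases h : q ∈ S
    · simp only [hAudef, h, dif_pos, Set.mem_insert_iff, Set.mem_singleton_iff] at hzq
      rcases hzq with h1 | h1 <;> rw [h1]
      · have := hxB q; simpa [combine, h] using this
      · have := hyB q; simpa [combine, h] using this
    · simp only [hAudef, h, dif_neg, Set.mem_singleton_iff, not_false_iff] at hzq
      rw [hzq]; have := hxB q; simpa [combine, h] using this
  have hxAu : combine S xS u ∈ prodSet Au := by
    intro q; by_cases h : q ∈ S <;> simp [hAudef, combine, h]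
  have hxcAu : combine S xS u ∈ c Au := by
    rw [hrat Au hAu]
    refine ⟨hxAu, fun z hz hst => ?_⟩
    exact hst.2 ⟨B, hBM, hxc, hsub hz⟩
  have hproj : projMenu S Au = projMenu S Av := by
    funext q
    simp [projMenu, hAudef, hAvdef, q.2]
  have hps := hsep Au hAu Av hAv hproj
  have hxin : proj S (combine S xS u) ∈ projSet S (c Av) := by
    rw [← hps]; exact ⟨_, hxcAu, rfl⟩
  obtain ⟨w, hwc, hwp⟩ := hxin
  have hwAv : w ∈ prodSet Av := (hc Av hAv).2 hwc
  have hw : w = combine S xS v := by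
    funext q
    by_cases h : q ∈ S
    · have := congrFun hwp ⟨q, h⟩
      simpa [proj, combine, h] using this
    · have := hwAv q
      simp only [hAvdef, h, dif_neg, Set.mem_singleton_iff, not_false_iff] at this
      simp [combine, h, this]
  have hyAv : combine S yS v ∈ prodSet Av := by
    intro q; by_cases h : q ∈ S <;> simp [hAvdef, combine, h]
  exact ⟨Av, hAv, hw ▸ hwc, hyAv⟩

end JC
end
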